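/- Let ρ > 0, let b > 0, let π be a probability density on [0,1], and let y ∈ [0,1]. Define s : [0,1] → ℝ by s(x) = b·exp( ρ·∫*_{ξ=x}^{y} π(ξ) dξ ). Then for all x ∈ [0,1]: s(x) = b + ρ·∫*_{u=x}^{y} π(u)·s(u) du. -/

import Mathlib

/-!
With `F u = ∫ v in u..y, π v`, the function `u ↦ exp (ρ * F u)` is absolutely continuous (an
indefinite integral composed with a `C¹` function), and by Lebesgue's differentiation theorem its
derivative is `-ρ * π u * exp (ρ * F u)` almost everywhere. The fundamental theorem of calculus for
absolutely continuous functions then gives `ρ * ∫ u in x..y, π u * exp (ρ * F u) = exp (ρ * F x) - 1`,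
which is the recursion for `x ≤ y`. When `x > y` the circular integral splits at `1`, and on `[x, 1]`
the factor `exp (ρ * ∫ v in 0..y, π v)` comes out of the integral.
-/

open MeasureTheory

/-- Circular integral: `∫*_{u=a}^{b} h(u) du` on the circle `[0,1)`.
It equals `∫_a^b h` if `a ≤ b` and `∫_a^1 h + ∫_0^b h` if `a > b`. -/
noncomputable def cint (a b : ℝ) (h : ℝ → ℝ) : ℝ :=
  if a ≤ b then ∫ u in a..b, h u
  else (∫ u in a..(1 : ℝ), h u) + ∫ u in (0 : ℝ)..b, h u

open Set intervalIntegral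
open scoped NNReal Interval

namespace AbsolutelyContinuousOnInterval

theorem comp_lipschitzOnWith {X Y : Type*} [PseudoMetricSpace X] [PseudoMetricSpace Y]
    {f : ℝ → X} {φ : X → Y} {a b : ℝ} {K : ℝ≥0} {s : Set X}
    (hφ : LipschitzOnWith K φ s) (hfs : MapsTo f (uIcc a b) s)
    (hf : AbsolutelyContinuousOnInterval f a b) :
    AbsolutelyContinuousOnInterval (φ ∘ f) a b := by
  have hK : Filter.Tendsto (fun E : ℕ × (ℕ → ℝ × ℝ) =>
      (K : ℝ) * ∑ i ∈ Finset.range E.1, dist (f (E.2 i).1) (f (E.2 i).2))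
      (totalLengthFilter ⊓ Filter.principal (disjWithin a b)) (nhds 0) := by
    simpa only [mul_zero] using Filter.Tendsto.const_mul (K : ℝ) hf
  refine squeeze_zero' (Filter.Eventually.of_forall fun _ =>
    Finset.sum_nonneg fun _ _ => dist_nonneg) ?_ hK
  refine Filter.eventually_inf_principal.mpr (Filter.Eventually.of_forall fun E hE => ?_)
  rw [Finset.mul_sum]
  exact Finset.sum_le_sum fun i hi => hφ.dist_le_mul _ (hfs (hE.1 i hi).1) _ (hfs (hE.1 i hi).2)

theorem comp_contDiff {E F : Type*} [NormedAddCommGroup E] [NormedSpace ℝ E]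
    [NormedAddCommGroup F] [NormedSpace ℝ F] {f : ℝ → E} {φ : E → F} {a b : ℝ}
    (hφ : ContDiff ℝ 1 φ) (hf : AbsolutelyContinuousOnInterval f a b) :
    AbsolutelyContinuousOnInterval (φ ∘ f) a b := by
  obtain ⟨K, hK⟩ := hφ.locallyLipschitz.locallyLipschitzOn.exists_lipschitzOnWith_of_compact
    (isCompact_uIcc.image_of_continuousOn hf.continuousOn)
  exact hf.comp_lipschitzOnWith hK (mapsTo_image f _)

theorem integral_deriv_comp_mul_deriv {f φ : ℝ → ℝ} {a b : ℝ}
    (hφ : ContDiff ℝ 1 φ) (hf : AbsolutelyContinuousOnInterval f a b) :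
    ∫ x in a..b, deriv φ (f x) * deriv f x = φ (f b) - φ (f a) := by
  rw [← Function.comp_apply (f := φ) (x := b), ← Function.comp_apply (f := φ) (x := a),
    ← (hf.comp_contDiff hφ).integral_deriv_eq_sub]
  refine integral_congr_ae ?_
  filter_upwards [hf.ae_differentiableAt] with x hx hxab
  exact (deriv_comp x (hφ.differentiable one_ne_zero _) (hx (uIoc_subset_uIcc hxab))).symm

end AbsolutelyContinuousOnInterval

theorem IntervalIntegrable.mul_integral_mul_exp_integral {f : ℝ → ℝ} {a b : ℝ}
    (hf : IntervalIntegrable f volume a b) (ρ : ℝ) :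
    ρ * ∫ u in a..b, f u * Real.exp (ρ * ∫ v in u..b, f v)
      = Real.exp (ρ * ∫ v in a..b, f v) - 1 := by
  set G : ℝ → ℝ := fun u => ρ * -∫ v in b..u, f v with hG
  have hG_eq : ∀ u, G u = ρ * ∫ v in u..b, f v := fun u => by rw [hG, integral_symm]
  have hG_ac : AbsolutelyContinuousOnInterval G a b :=
    (hf.absolutelyContinuousOnInterval_intervalIntegral right_mem_uIcc).fun_neg.const_mul ρ
  have hG_deriv : ∀ᵐ u, u ∈ Ι a b → deriv G u = -(ρ * f u) := by
    filter_upwards [hf.ae_hasDerivAt_integral] with u hu hab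
    exact ((hu (uIoc_subset_uIcc hab) b right_mem_uIcc).neg.const_mul ρ).deriv.trans (by ring)
  calc ρ * ∫ u in a..b, f u * Real.exp (ρ * ∫ v in u..b, f v)
      = -∫ u in a..b, deriv Real.exp (G u) * deriv G u := by
        rw [← intervalIntegral.integral_const_mul, ← intervalIntegral.integral_neg]
        refine integral_congr_ae ?_
        filter_upwards [hG_deriv] with u hu hab
        rw [hu hab, Real.deriv_exp, hG_eq]
        ring
    _ = Real.exp (ρ * ∫ v in a..b, f v) - 1 := by
        rw [hG_ac.integral_deriv_comp_mul_deriv Real.contDiff_exp, hG_eq, hG_eq,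
          integral_same, mul_zero, Real.exp_zero]
        ring

theorem cint_of_le {a b : ℝ} (h : ℝ → ℝ) (hab : a ≤ b) : cint a b h = ∫ u in a..b, h u :=
  if_pos hab

theorem cint_of_lt {a b : ℝ} (h : ℝ → ℝ) (hba : b < a) :
    cint a b h = (∫ u in a..1, h u) + ∫ u in 0..b, h u :=
  if_neg hba.not_ge

theorem cint_const_mul (a b c : ℝ) (h : ℝ → ℝ) :
    cint a b (fun u => c * h u) = c * cint a b h := by
  unfold cint
  split_ifs <;> simp only [intervalIntegral.integral_const_mul, mul_add]

theorem exp_mul_cint_eq {π : ℝ → ℝ} (hπ : IntervalIntegrable π volume 0 1) {x y : ℝ}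
    (hx : x ∈ Icc (0 : ℝ) 1) (hy : y ∈ Icc (0 : ℝ) 1) (ρ : ℝ) :
    Real.exp (ρ * cint x y π)
      = 1 + ρ * cint x y (fun u => π u * Real.exp (ρ * cint u y π)) := by
  have hmono : ∀ {c d : ℝ}, c ∈ Icc (0 : ℝ) 1 → d ∈ Icc (0 : ℝ) 1 →
      IntervalIntegrable π volume c d := fun hc hd =>
    hπ.mono_set (uIcc_subset_uIcc (by rwa [uIcc_of_le zero_le_one])
      (by rwa [uIcc_of_le zero_le_one]))
  rcases le_or_gt x y with hxy | hyx
  · have hcongr : cint x y (fun u => π u * Real.exp (ρ * cint u y π))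
        = ∫ u in x..y, π u * Real.exp (ρ * ∫ v in u..y, π v) := by
      rw [cint_of_le _ hxy]
      refine integral_congr fun u hu => ?_
      rw [uIcc_of_le hxy] at hu
      simp only [cint_of_le _ hu.2]
    rw [hcongr, (hmono hx hy).mul_integral_mul_exp_integral, cint_of_le _ hxy]
    ring
  · set B := ∫ v in (0 : ℝ)..y, π v
    have hcongr : (∫ u in x..1, π u * Real.exp (ρ * cint u y π))
        = Real.exp (ρ * B) * ∫ u in x..1, π u * Real.exp (ρ * ∫ v in u..1, π v) := by
      rw [← intervalIntegral.integral_const_mul]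
      refine integral_congr fun u hu => ?_
      rw [uIcc_of_le hx.2] at hu
      simp only [cint_of_lt _ (hyx.trans_le hu.1), mul_add, Real.exp_add]
      ring
    have hcongr' : (∫ u in (0 : ℝ)..y, π u * Real.exp (ρ * cint u y π))
        = ∫ u in (0 : ℝ)..y, π u * Real.exp (ρ * ∫ v in u..y, π v) := by
      refine integral_congr fun u hu => ?_
      rw [uIcc_of_le hy.1] at hu
      simp only [cint_of_le _ hu.2]
    have h1 := (hmono hx ⟨zero_le_one, le_rfl⟩).mul_integral_mul_exp_integral ρ
    have h2 := (hmono ⟨le_rfl, zero_le_one⟩ hy).mul_integral_mul_exp_integral ρ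
    rw [cint_of_lt _ hyx, cint_of_lt _ hyx, hcongr, hcongr', mul_add, Real.exp_add]
    linear_combination (-Real.exp (ρ * B)) * h1 - h2

theorem generated_waiting_time_recursion_general
    (ρ b : ℝ)
    (π : ℝ → ℝ)
    (hπint : IntervalIntegrable π volume 0 1)
    (y : ℝ) (hy : y ∈ Set.Icc (0 : ℝ) 1)
    (s : ℝ → ℝ)
    (hs : ∀ x : ℝ, s x = b * Real.exp (ρ * cint x y π)) :
    ∀ x ∈ Set.Icc (0 : ℝ) 1,
      s x = b + ρ * cint x y (fun u => π u * s u) := by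
  intro x hx
  have hπs : (fun u => π u * s u) = fun u => b * (π u * Real.exp (ρ * cint u y π)) :=
    funext fun u => by rw [hs]; ring
  rw [hs, hπs, cint_const_mul, exp_mul_cint_eq hπint hx hy ρ]
  ring

/-- The expected extra waiting time generated by a service,
`s(x) = b·exp(ρ·∫*_{ξ=x}^{y} π(ξ) dξ)`, satisfies the recursion
`s(x) = b + ρ·∫*_{u=x}^{y} π(u)·s(u) du` for all `x ∈ [0,1]`. -/
theorem generated_waiting_time_recursion
    (ρ b : ℝ) (hρ : 0 < ρ) (hb : 0 < b)
    (π : ℝ → ℝ) (hπmeas : Measurable π)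
    (hπnn : ∀ x ∈ Set.Icc (0 : ℝ) 1, 0 ≤ π x)
    (hπint : IntervalIntegrable π volume 0 1)
    (hπ1 : (∫ u in (0 : ℝ)..1, π u) = 1)
    (y : ℝ) (hy : y ∈ Set.Icc (0 : ℝ) 1)
    (s : ℝ → ℝ)
    (hs : ∀ x : ℝ, s x = b * Real.exp (ρ * cint x y π)) :
    ∀ x ∈ Set.Icc (0 : ℝ) 1,
      s x = b + ρ * cint x y (fun u => π u * s u) :=
  generated_waiting_time_recursion_general ρ b π hπint y hy s hs
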